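/- For a weakly connected graph G with incidence matrix A_G and block-diagonal Y_L whose blocks Y_ℓ all have positive definite Hermitian part, the matrix (A^P)ᵀ Y_L A^P (with A^P = A_G ⊗ I_{|P|}) has kernel exactly equal to {1_N ⊗ c : c ∈ ℂ^{|P|}}. -/

import Mathlib

open Matrix Kronecker
open scoped ComplexOrder

/-- Block-diagonal matrix with blocks `f i` indexed by `ι × P`. -/
def blockDiag {ι P : Type*} [DecidableEq ι] (f : ι → Matrix P P ℂ) :
    Matrix (ι × P) (ι × P) ℂ :=
  fun a b => if a.1 = b.1 then f a.1 a.2 b.2 else 0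

/-- Hermitian part of a complex matrix. -/
noncomputable def hermPart {m : Type*} (M : Matrix m m ℂ) : Matrix m m ℂ :=
  (1 / 2 : ℂ) • (M + Mᴴ)

section aux
variable {E P : Type*} [Fintype E] [Fintype P] [DecidableEq E]

lemma blockDiag_quad (f : E → Matrix P P ℂ) (y : E × P → ℂ) :
    star y ⬝ᵥ (blockDiag f).mulVec y
      = ∑ e, star (fun p => y (e, p)) ⬝ᵥ (f e).mulVec (fun p => y (e, p)) := by
  simp only [dotProduct, mulVec, _root_.blockDiag, Fintype.sum_prod_type, Pi.star_apply,
    ite_mul, zero_mul, mul_ite, mul_zero]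
  congr 1; funext e; congr 1; funext p; congr 1
  rw [Finset.sum_comm]
  simp

lemma conj_quad {m : Type*} [Fintype m] (M : Matrix m m ℂ) (y : m → ℂ) :
    star y ⬝ᵥ Mᴴ.mulVec y = star (star y ⬝ᵥ M.mulVec y) := by
  simp only [dotProduct, mulVec, conjTranspose_apply, star_sum, star_mul', star_star,
    Finset.mul_sum, Pi.star_apply]
  rw [Finset.sum_comm]
  congr 1; funext i; congr 1; funext j; ring

omit [Fintype E] [Fintype P] in
lemma hermPart_blockDiag (f : E → Matrix P P ℂ) :
    hermPart (blockDiag f) = blockDiag (fun e => hermPart (f e)) := by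
  funext a b
  obtain ⟨a1, a2⟩ := a; obtain ⟨b1, b2⟩ := b
  by_cases h : a1 = b1
  · subst h
    simp [hermPart, _root_.blockDiag, conjTranspose_apply]
  · simp only [hermPart, _root_.blockDiag, Matrix.smul_apply, Matrix.add_apply,
      conjTranspose_apply]
    simp [h, Ne.symm h]

end aux

theorem laplacian_kernel
    {E N P : Type*} [Fintype E] [Fintype N] [Fintype P]
    [DecidableEq E] [DecidableEq N] [DecidableEq P]
    (head tail : E → N) (hht : ∀ e, head e ≠ tail e)
    (A : Matrix E N ℝ)
    (hA : ∀ e v, A e v = if v = head e then 1 else if v = tail e then -1 else 0)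
    (hconn : ∀ v w : N, Relation.ReflTransGen
      (fun a b => ∃ e, (head e = a ∧ tail e = b) ∨ (head e = b ∧ tail e = a)) v w)
    (Yl : E → Matrix P P ℂ) (hYl : ∀ ℓ, (hermPart (Yl ℓ)).PosDef)
    (x : N × P → ℂ) :
    (((A.map (Complex.ofReal)) ⊗ₖ (1 : Matrix P P ℂ))ᵀ * blockDiag Yl *
        ((A.map (Complex.ofReal)) ⊗ₖ (1 : Matrix P P ℂ))).mulVec x = 0 ↔
      ∃ c : P → ℂ, x = fun vp => c vp.2 := by
  set B := (A.map (Complex.ofReal)) ⊗ₖ (1 : Matrix P P ℂ) with hBdef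
  have hBT : Bᵀ = Bᴴ := by
    funext a b
    simp only [hBdef, transpose_apply, conjTranspose_apply, kroneckerMap_apply,
      Matrix.map_apply, Matrix.one_apply, star_mul', apply_ite (star : ℂ → ℂ), star_one, star_zero,
      Complex.star_def, Complex.conj_ofReal]
  have hBmul : ∀ z : N × P → ℂ, ∀ e p,
      B.mulVec z (e, p) = z (head e, p) - z (tail e, p) := by
    intro z e p
    have key : ∀ v : N, ((A e v : ℂ)) * z (v, p)
        = (if v = head e then z (v, p) else 0) + (if v = tail e then -z (v, p) else 0) := by
      intro v
      rw [hA]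
      by_cases h1 : v = head e
      · subst h1
        simp [hht e]
      · by_cases h2 : v = tail e
        · subst h2
          simp [h1]
        · simp [h1, h2]
    simp only [hBdef, mulVec, dotProduct, Fintype.sum_prod_type, kroneckerMap_apply,
      Matrix.map_apply]
    have : ∀ v : N, ∑ q : P, (A e v : ℂ) * (1 : Matrix P P ℂ) p q * z (v, q)
        = (A e v : ℂ) * z (v, p) := by
      intro v
      simp [Matrix.one_apply, ite_mul, mul_ite]
    rw [Finset.sum_congr rfl fun v _ => this v,
      Finset.sum_congr rfl fun v _ => key v, Finset.sum_add_distrib]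
    simp [sub_eq_add_neg]
  constructor
  · intro hx
    set y := B.mulVec x with hy
    -- quadratic form vanishes
    have h1 : star y ⬝ᵥ (blockDiag Yl).mulVec y = 0 := by
      rw [hy, Matrix.star_mulVec, Matrix.dotProduct_mulVec, Matrix.vecMul_vecMul,
        ← Matrix.dotProduct_mulVec, Matrix.mulVec_mulVec, Matrix.mul_assoc, ← Matrix.mul_assoc,
        ← hBT, hx]
      simp
    have h2 : star y ⬝ᵥ (blockDiag (fun e => hermPart (Yl e))).mulVec y = 0 := by
      rw [← hermPart_blockDiag]
      have h1' : star y ⬝ᵥ (blockDiag Yl)ᴴ.mulVec y = 0 := by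
        rw [conj_quad, h1, star_zero]
      simp only [hermPart, Matrix.smul_mulVec, Matrix.add_mulVec, dotProduct_smul,
        dotProduct_add, h1, h1', add_zero, smul_zero]
    rw [blockDiag_quad] at h2
    have hterms : ∀ e : E, star (fun p => y (e, p)) ⬝ᵥ
        (hermPart (Yl e)).mulVec (fun p => y (e, p)) = 0 := by
      have := (Finset.sum_eq_zero_iff_of_nonneg
        (fun e _ => ((hYl e).posSemidef.dotProduct_mulVec_nonneg (fun p => y (e, p))))).mp h2
      intro e; exact this e (Finset.mem_univ e)
    have hy0 : ∀ e p, y (e, p) = 0 := by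
      intro e p
      by_cases hv : (fun p => y (e, p)) = 0
      · exact congrFun hv p
      · exact absurd (hterms e) (ne_of_gt ((hYl e).dotProduct_mulVec_pos hv))
    -- so x is constant along edges
    have hedge : ∀ e p, x (head e, p) = x (tail e, p) := by
      intro e p
      have := hy0 e p
      rw [hy, hBmul] at this
      linear_combination this
    have hconst : ∀ v w : N, ∀ p, x (v, p) = x (w, p) := by
      intro v w p
      induction hconn v w with
      | refl => rfl
      | tail _ hstep ih =>
        obtain ⟨e, he⟩ := hstep
        rcases he with ⟨h1', h2'⟩ | ⟨h1', h2'⟩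
        · rw [ih, ← h1', ← h2', hedge]
        · rw [ih, ← h1', ← h2', hedge]
    rcases isEmpty_or_nonempty N with hN | hN
    · exact ⟨fun _ => 0, funext fun vp => (hN.elim vp.1)⟩
    · obtain ⟨v0⟩ := hN
      exact ⟨fun p => x (v0, p), funext fun vp => hconst vp.1 v0 vp.2⟩
  · rintro ⟨c, rfl⟩
    have hB0 : B.mulVec (fun vp => c vp.2) = 0 := by
      funext ep
      obtain ⟨e, p⟩ := ep
      rw [hBmul]
      simp
    rw [← Matrix.mulVec_mulVec, ← Matrix.mulVec_mulVec, hB0]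
    simp
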